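/- Fix M ≥ 0, μ > 0, a nonempty finite user set K, and for each k ∈ K: a Hermitian positive semidefinite matrix A_k ∈ ℂ^{(M+1)×(M+1)} and a vector a_k ∈ ℂ^{M+1}, so that the surrogate rate is R̃_k(e) = c_k + 2·Re(a_kᴴ e) − eᴴ A_k e with c_k ∈ ℝ, and set f(e) = −(1/μ)·ln( Σ_{k∈K} exp(−μ·R̃_k(e)) ). Let λ_k, ν_k ∈ ℝ satisfy: λ_k·I − A_k and ν_k·I − A_k A_kᴴ are positive semidefinite. Given eⁿ ∈ ℂ^{M+1} with |eⁿ_m| = 1 for all m, define the softmax weights g_k(eⁿ) = exp(−μ·R̃_k(eⁿ))/Σ_{j∈K} exp(−μ·R̃_j(eⁿ)), tp2_k = ‖a_k‖₂² + (M+1)·ν_k + 2·‖A_k a_k‖₁, β = −max_{k∈K}{λ_k} − 2μ·max_{k∈K}{tp2_k}, d = Σ_{k∈K} g_k(eⁿ)·(a_k − A_k eⁿ), u = d − β·eⁿ, and consE = f(eⁿ) + 2(M+1)·β − 2·Re(dᴴ eⁿ). Then for every e ∈ ℂ^{M+1} with |e_m| = 1 for all m: f(e) ≥ 2·Re(uᴴ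 e) + consE, and equality holds at e = eⁿ. -/

import Mathlib

open Matrix
open scoped ComplexOrder

/-!
Write `δ = e - eⁿ`. For a Hermitian `A_k` the increment of `R̃_k` is exactly linear in `δ` when
the gradient is taken at the midpoint `ē = (e + eⁿ)/2`, which lies in the unit polydisc, where
`‖a_k - A_k ē‖₂² ≤ tp2_k`; by Cauchy–Schwarz the increment is at most `2 √(tp2_k) ‖δ‖₂` in
absolute value, while `λ_k I - A_k ⪰ 0` bounds it from below by its linearisation at `eⁿ` minus
`λ_k ‖δ‖₂²`. The softmax weights turn `f(e) - f(eⁿ)` into `-(1/μ) ln E[exp(-μ Δ)]` for the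
increments `Δ_k` under the law `g(eⁿ)`, and Hoeffding's lemma gives
`f(e) ≥ f(eⁿ) + E[Δ] - 2μ max tp2 ‖δ‖₂²`. Together, `f(e) ≥ f(eⁿ) + 2 Re(dᴴδ) + β ‖δ‖₂²`,
and on the torus `‖δ‖₂² = 2(M+1) - 2 Re(eⁿᴴ e)` is affine in `e`.
-/

open MeasureTheory ProbabilityTheory in
/-- Hoeffding's lemma for the law on `ι` with weights `w`. -/
theorem Real.log_sum_mul_exp_le {ι : Type*} [Fintype ι] {w x : ι → ℝ} (hw : ∀ i, 0 ≤ w i)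
    (hw1 : ∑ i, w i = 1) {B : ℝ} (hx : ∀ i, x i ^ 2 ≤ B) :
    Real.log (∑ i, w i * Real.exp (x i)) ≤ ∑ i, w i * x i + B / 2 := by
  let _ : MeasurableSpace ι := ⊤
  let p := PMF.ofFintype (fun i ↦ ENNReal.ofReal (w i)) (by
    rw [← ENNReal.ofReal_sum_of_nonneg fun i _ ↦ hw i, hw1, ENNReal.ofReal_one])
  have hp (g : ι → ℝ) : ∫ i, g i ∂p.toMeasure = ∑ i, w i * g i := by
    simp [PMF.integral_eq_sum, p, PMF.ofFintype_apply, ENNReal.toReal_ofReal (hw _)]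
  obtain ⟨j, -, hj⟩ : ∃ j ∈ Finset.univ, (0 : ℝ) < w j :=
    Finset.exists_lt_of_sum_lt (by simp [hw1])
  have hB : 0 ≤ B := (sq_nonneg _).trans (hx j)
  have hoeffding := (hasSubgaussianMGF_of_mem_Icc (μ := p.toMeasure) (X := x)
    (a := -√B) (b := √B) Measurable.of_discrete.aemeasurable
    (ae_of_all _ fun i ↦ abs_le.mp (Real.abs_le_sqrt (hx i)))).mgf_le 1
  have hc : (((‖√B - -√B‖₊ / 2) ^ 2 : NNReal) : ℝ) = B := by
    simp [← two_mul, Real.sq_sqrt hB]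
  simp only [mgf, hp, one_mul, Real.exp_sub, mul_div_assoc'] at hoeffding
  rw [← Finset.sum_div, div_le_iff₀ (Real.exp_pos _), hc, ← Real.exp_add] at hoeffding
  have hS : 0 < ∑ i, w i * Real.exp (x i) :=
    Finset.sum_pos' (fun i _ ↦ by have := hw i; positivity) ⟨j, by simp, by positivity⟩
  rw [Real.log_le_iff_le_exp hS]
  simpa [add_comm] using hoeffding

section SoftMin

variable {K : Type*} [Fintype K]

noncomputable def softMin (μ : ℝ) (r : K → ℝ) : ℝ :=
  -(1 / μ) * Real.log (∑ k, Real.exp (-μ * r k))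

noncomputable def softMinWeight (μ : ℝ) (r : K → ℝ) (k : K) : ℝ :=
  Real.exp (-μ * r k) / ∑ j, Real.exp (-μ * r j)

variable [Nonempty K] (μ : ℝ) (r r₀ : K → ℝ)

lemma sum_exp_neg_mul_pos : 0 < ∑ k, Real.exp (-μ * r k) :=
  Finset.sum_pos (fun _ _ ↦ Real.exp_pos _) Finset.univ_nonempty

lemma softMinWeight_pos : ∀ k, 0 < softMinWeight μ r k :=
  fun _ ↦ div_pos (Real.exp_pos _) (sum_exp_neg_mul_pos μ r)

lemma sum_softMinWeight : ∑ k, softMinWeight μ r k = 1 := by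
  simp only [softMinWeight]
  rw [← Finset.sum_div, div_self (sum_exp_neg_mul_pos μ r).ne']

lemma softMin_sub_softMin :
    softMin μ r - softMin μ r₀
      = -(1 / μ) * Real.log (∑ k, softMinWeight μ r₀ k * Real.exp (-μ * (r k - r₀ k))) := by
  have hterm (k : K) : softMinWeight μ r₀ k * Real.exp (-μ * (r k - r₀ k))
      = Real.exp (-μ * r k) / ∑ j, Real.exp (-μ * r₀ j) := by
    rw [softMinWeight, div_mul_eq_mul_div, ← Real.exp_add]
    ring_nf
  simp only [hterm, ← Finset.sum_div]
  rw [Real.log_div (sum_exp_neg_mul_pos μ r).ne' (sum_exp_neg_mul_pos μ r₀).ne', softMin, softMin]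
  ring

theorem le_softMin {μ : ℝ} (hμ : 0 < μ) {r r₀ ℓ : K → ℝ} {C : ℝ}
    (hC : ∀ k, (r k - r₀ k) ^ 2 ≤ C) (hℓ : ∀ k, ℓ k ≤ r k - r₀ k) :
    softMin μ r₀ + ∑ k, softMinWeight μ r₀ k * ℓ k - μ * C / 2 ≤ softMin μ r := by
  have hlog := Real.log_sum_mul_exp_le (fun k ↦ (softMinWeight_pos μ r₀ k).le)
    (sum_softMinWeight μ r₀) (x := fun k ↦ -μ * (r k - r₀ k)) (B := μ ^ 2 * C)
    fun k ↦ by simpa [mul_pow] using mul_le_mul_of_nonneg_left (hC k) (sq_nonneg μ)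
  have hlin : ∑ k, softMinWeight μ r₀ k * (-μ * (r k - r₀ k))
      = -μ * ∑ k, softMinWeight μ r₀ k * (r k - r₀ k) := by
    rw [Finset.mul_sum]
    exact Finset.sum_congr rfl fun k _ ↦ by ring
  rw [hlin] at hlog
  have hweighted : ∑ k, softMinWeight μ r₀ k * ℓ k ≤ ∑ k, softMinWeight μ r₀ k * (r k - r₀ k) :=
    Finset.sum_le_sum fun k _ ↦ mul_le_mul_of_nonneg_left (hℓ k) (softMinWeight_pos μ r₀ k).le
  have hbound : ∑ k, softMinWeight μ r₀ k * (r k - r₀ k) - μ * C / 2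
      ≤ -(1 / μ) * Real.log (∑ k, softMinWeight μ r₀ k * Real.exp (-μ * (r k - r₀ k))) :=
    calc _ = -(1 / μ) * (-μ * ∑ k, softMinWeight μ r₀ k * (r k - r₀ k) + μ ^ 2 * C / 2) := by
          field_simp
          ring
      _ ≤ _ := mul_le_mul_of_nonpos_left hlog (by simp [hμ.le])
  linarith [softMin_sub_softMin μ r r₀]

end SoftMin

lemma nonneg_of_posSemidef_smul_one_sub {n : Type*} [DecidableEq n] [Nonempty n]
    {A : Matrix n n ℂ} {t : ℝ} (hA : A.PosSemidef) (h : (t • 1 - A).PosSemidef) : 0 ≤ t := by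
  obtain ⟨i⟩ := ‹Nonempty n›
  simpa using add_nonneg (h.diag_nonneg (i := i)) (hA.diag_nonneg (i := i))

section Vectors

variable {n : Type*} [Fintype n]

lemma re_star_dotProduct_self (v : n → ℂ) : (star v ⬝ᵥ v).re = ∑ i, ‖v i‖ ^ 2 := by
  simp [dotProduct, Complex.re_sum, Complex.sq_norm, Complex.normSq_apply, mul_comm]

lemma re_star_dotProduct_comm (v w : n → ℂ) : (star v ⬝ᵥ w).re = (star w ⬝ᵥ v).re := by
  rw [star_dotProduct, Complex.star_def, Complex.conj_re]

lemma sq_re_star_dotProduct_le (v w : n → ℂ) :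
    (star v ⬝ᵥ w).re ^ 2 ≤ (∑ i, ‖v i‖ ^ 2) * ∑ i, ‖w i‖ ^ 2 := by
  have hcs : |(star v ⬝ᵥ w).re| ≤ ‖WithLp.toLp 2 v‖ * ‖WithLp.toLp 2 w‖ := by
    refine (Complex.abs_re_le_norm _).trans ?_
    rw [dotProduct_comm, ← EuclideanSpace.inner_toLp_toLp]
    exact norm_inner_le_norm _ _
  rw [← EuclideanSpace.norm_sq_eq, ← EuclideanSpace.norm_sq_eq, ← mul_pow, ← sq_abs]
  exact pow_le_pow_left₀ (abs_nonneg _) hcs 2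

lemma abs_re_star_dotProduct_le_of_norm_le_one (v : n → ℂ) {z : n → ℂ}
    (hz : ∀ i, ‖z i‖ ≤ 1) : |(star v ⬝ᵥ z).re| ≤ ∑ i, ‖v i‖ :=
  calc |(star v ⬝ᵥ z).re| ≤ ‖star v ⬝ᵥ z‖ := Complex.abs_re_le_norm _
    _ ≤ ∑ i, ‖star (v i) * z i‖ := norm_sum_le _ _
    _ ≤ ∑ i, ‖v i‖ := Finset.sum_le_sum fun i _ ↦ by
      simpa [norm_mul] using mul_le_of_le_one_right (norm_nonneg (v i)) (hz i)

lemma sum_norm_sq_sub_of_norm_eq_one {x y : n → ℂ} (hx : ∀ i, ‖x i‖ = 1)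
    (hy : ∀ i, ‖y i‖ = 1) :
    ∑ i, ‖(y - x) i‖ ^ 2 = 2 * Fintype.card n - 2 * (star x ⬝ᵥ y).re := by
  have hterm (i : n) : ‖(y - x) i‖ ^ 2 = 2 - 2 * (star (x i) * y i).re := by
    rw [Pi.sub_apply, ← Complex.normSq_eq_norm_sq, Complex.normSq_sub, Complex.normSq_eq_norm_sq,
      Complex.normSq_eq_norm_sq, hx, hy, mul_comm]
    simp
    ring
  rw [Finset.sum_congr rfl fun i _ ↦ hterm i, Finset.sum_sub_distrib, ← Finset.mul_sum]
  simp [dotProduct, Complex.re_sum, mul_comm]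

lemma re_star_sum_smul_dotProduct {K : Type*} [Fintype K] (w : K → ℝ) (g : K → n → ℂ)
    (v : n → ℂ) : (star (∑ k, w k • g k) ⬝ᵥ v).re = ∑ k, w k * (star (g k) ⬝ᵥ v).re := by
  simp [star_sum, sum_dotProduct, Complex.re_sum, Complex.real_smul]

lemma Matrix.IsHermitian.star_mulVec_dotProduct {A : Matrix n n ℂ} (hA : A.IsHermitian)
    (x y : n → ℂ) : star (A *ᵥ x) ⬝ᵥ y = star x ⬝ᵥ A *ᵥ y := by
  rw [star_mulVec, hA.eq, dotProduct_mulVec]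

lemma re_star_dotProduct_mulVec_le [DecidableEq n] {A : Matrix n n ℂ} {t : ℝ}
    (h : (t • 1 - A).PosSemidef) (v : n → ℂ) : (star v ⬝ᵥ A *ᵥ v).re ≤ t * ∑ i, ‖v i‖ ^ 2 := by
  have := h.re_dotProduct_nonneg v
  simp only [sub_mulVec, smul_mulVec, one_mulVec, dotProduct_sub, dotProduct_smul,
    RCLike.re_to_complex, Complex.sub_re, Complex.real_smul, Complex.re_ofReal_mul,
    sub_nonneg] at this
  rwa [re_star_dotProduct_self] at this

end Vectors

section QuadFun

variable {n : Type*} [Fintype n]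

/-- `R̃_k(e) - c_k` for `a = a_k`, `A = A_k`. -/
def quadFun (a : n → ℂ) (A : Matrix n n ℂ) (e : n → ℂ) : ℝ :=
  2 * (star a ⬝ᵥ e).re - (star e ⬝ᵥ A *ᵥ e).re

variable {A : Matrix n n ℂ} (hA : A.IsHermitian) (a : n → ℂ)
include hA

lemma quadFun_sub (x y : n → ℂ) :
    quadFun a A y - quadFun a A x
      = 2 * (star (a - A *ᵥ x) ⬝ᵥ (y - x)).re - (star (y - x) ⬝ᵥ A *ᵥ (y - x)).re := by
  obtain ⟨δ, rfl⟩ : ∃ δ, y = x + δ := ⟨y - x, by abel⟩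
  have hsymm : (star δ ⬝ᵥ A *ᵥ x).re = (star x ⬝ᵥ A *ᵥ δ).re := by
    rw [re_star_dotProduct_comm, hA.star_mulVec_dotProduct]
  simp only [quadFun, add_sub_cancel_left, star_add, add_dotProduct, dotProduct_add, mulVec_add,
    star_sub, sub_dotProduct, hA.star_mulVec_dotProduct, Complex.add_re, Complex.sub_re]
  linarith

lemma quadFun_sub_eq_midpoint (x y : n → ℂ) :
    quadFun a A y - quadFun a A x
      = 2 * (star (a - A *ᵥ ((2 : ℂ)⁻¹ • (x + y))) ⬝ᵥ (y - x)).re := by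
  have hmid : a - A *ᵥ ((2 : ℂ)⁻¹ • (x + y)) = (a - A *ᵥ x) - (2 : ℂ)⁻¹ • A *ᵥ (y - x) := by
    rw [mulVec_smul, mulVec_add, mulVec_sub]
    module
  rw [quadFun_sub hA, hmid]
  simp only [star_sub, sub_dotProduct, star_smul, smul_dotProduct, hA.star_mulVec_dotProduct]
  simp
  ring

lemma sum_norm_sq_sub_mulVec_le [DecidableEq n] {ν : ℝ} (hν : (ν • 1 - A * Aᴴ).PosSemidef)
    {z : n → ℂ} (hz : ∀ i, ‖z i‖ ≤ 1) :
    ∑ i, ‖(a - A *ᵥ z) i‖ ^ 2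
      ≤ ∑ i, ‖a i‖ ^ 2 + Fintype.card n * ν + 2 * ∑ i, ‖(A *ᵥ a) i‖ := by
  have hz_card : ∑ i, ‖z i‖ ^ 2 ≤ Fintype.card n := by
    simpa using Finset.sum_le_sum fun i (_ : i ∈ Finset.univ) ↦
      pow_le_one₀ (norm_nonneg _) (hz i)
  have hquad : (star (A *ᵥ z) ⬝ᵥ A *ᵥ z).re ≤ Fintype.card n * ν := by
    have hAA : A * A = A * Aᴴ := by rw [hA.eq]
    rw [hA.star_mulVec_dotProduct, mulVec_mulVec, hAA]
    refine (re_star_dotProduct_mulVec_le hν z).trans ?_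
    rcases isEmpty_or_nonempty n
    · simp
    · have := nonneg_of_posSemidef_smul_one_sub (posSemidef_self_mul_conjTranspose A) hν
      nlinarith
  have hcross : |(star (A *ᵥ a) ⬝ᵥ z).re| ≤ ∑ i, ‖(A *ᵥ a) i‖ :=
    abs_re_star_dotProduct_le_of_norm_le_one _ hz
  have hexp : (star (a - A *ᵥ z) ⬝ᵥ (a - A *ᵥ z)).re
      = (star a ⬝ᵥ a).re - 2 * (star (A *ᵥ a) ⬝ᵥ z).re + (star (A *ᵥ z) ⬝ᵥ A *ᵥ z).re := by
    simp only [star_sub, sub_dotProduct, dotProduct_sub, Complex.sub_re,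
      re_star_dotProduct_comm (A *ᵥ z) a, ← hA.star_mulVec_dotProduct a z]
    ring
  rw [← re_star_dotProduct_self, ← re_star_dotProduct_self, hexp]
  linarith [abs_le.mp hcross]

lemma quadFun_sub_ge [DecidableEq n] {t : ℝ} (ht : (t • 1 - A).PosSemidef) (x y : n → ℂ) :
    2 * (star (a - A *ᵥ x) ⬝ᵥ (y - x)).re - t * ∑ i, ‖(y - x) i‖ ^ 2
      ≤ quadFun a A y - quadFun a A x := by
  rw [quadFun_sub hA]
  linarith [re_star_dotProduct_mulVec_le ht (y - x)]

lemma sq_quadFun_sub_le [DecidableEq n] {ν : ℝ} (hν : (ν • 1 - A * Aᴴ).PosSemidef)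
    {x y : n → ℂ} (hx : ∀ i, ‖x i‖ ≤ 1) (hy : ∀ i, ‖y i‖ ≤ 1) :
    (quadFun a A y - quadFun a A x) ^ 2
      ≤ 4 * (∑ i, ‖a i‖ ^ 2 + Fintype.card n * ν + 2 * ∑ i, ‖(A *ᵥ a) i‖)
        * ∑ i, ‖(y - x) i‖ ^ 2 := by
  have hmid (i : n) : ‖((2 : ℂ)⁻¹ • (x + y)) i‖ ≤ 1 := by
    have := norm_add_le (x i) (y i)
    simp only [Pi.smul_apply, Pi.add_apply, smul_eq_mul, norm_mul, norm_inv, Complex.norm_two]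
    linarith [hx i, hy i]
  rw [quadFun_sub_eq_midpoint hA]
  calc _ = 4 * (star (a - A *ᵥ ((2 : ℂ)⁻¹ • (x + y))) ⬝ᵥ (y - x)).re ^ 2 := by ring
    _ ≤ 4 * ((∑ i, ‖(a - A *ᵥ ((2 : ℂ)⁻¹ • (x + y))) i‖ ^ 2) * ∑ i, ‖(y - x) i‖ ^ 2) := by
      gcongr
      exact sq_re_star_dotProduct_le _ _
    _ ≤ _ := by
      rw [mul_assoc]
      gcongr
      exact sum_norm_sq_sub_mulVec_le hA a hν hmid

end QuadFun

theorem le_softMin_quadFun {n K : Type*} [Fintype n] [DecidableEq n] [Fintype K] [Nonempty K]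
    {μ : ℝ} (hμ : 0 < μ) {A : K → Matrix n n ℂ} (hA : ∀ k, (A k).IsHermitian)
    {a : K → n → ℂ} {c : K → ℝ} {r : K → (n → ℂ) → ℝ}
    (hr : ∀ k e, r k e = c k + quadFun (a k) (A k) e) {lam nu : K → ℝ}
    (hlam : ∀ k, (lam k • 1 - A k).PosSemidef) (hnu : ∀ k, (nu k • 1 - A k * (A k)ᴴ).PosSemidef)
    {L T : ℝ} (hL : ∀ k, lam k ≤ L)
    (hT : ∀ k, ∑ i, ‖a k i‖ ^ 2 + Fintype.card n * nu k + 2 * ∑ i, ‖(A k *ᵥ a k) i‖ ≤ T)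
    {x y : n → ℂ} (hx : ∀ i, ‖x i‖ ≤ 1) (hy : ∀ i, ‖y i‖ ≤ 1) :
    softMin μ (r · x)
        + 2 * (star (∑ k, softMinWeight μ (r · x) k • (a k - A k *ᵥ x)) ⬝ᵥ (y - x)).re
        - (L + 2 * μ * T) * ∑ i, ‖(y - x) i‖ ^ 2
      ≤ softMin μ (r · y) := by
  set N := ∑ i, ‖(y - x) i‖ ^ 2
  have hN : 0 ≤ N := by positivity
  have hdiff (k : K) : r k y - r k x = quadFun (a k) (A k) y - quadFun (a k) (A k) x := by
    rw [hr, hr]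
    ring
  have hlower (k : K) : 2 * (star (a k - A k *ᵥ x) ⬝ᵥ (y - x)).re - L * N ≤ r k y - r k x := by
    have := quadFun_sub_ge (hA k) (a k) (hlam k) x y
    linarith [hdiff k, mul_le_mul_of_nonneg_right (hL k) hN]
  have hsq (k : K) : (r k y - r k x) ^ 2 ≤ 4 * T * N := by
    have := sq_quadFun_sub_le (hA k) (a k) (hnu k) hx hy
    rw [← hdiff] at this
    linarith [mul_le_mul_of_nonneg_right (mul_le_mul_of_nonneg_left (hT k) zero_le_four) hN]
  have hweighted : ∑ k, softMinWeight μ (r · x) k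
        * (2 * (star (a k - A k *ᵥ x) ⬝ᵥ (y - x)).re - L * N)
      = 2 * (star (∑ k, softMinWeight μ (r · x) k • (a k - A k *ᵥ x)) ⬝ᵥ (y - x)).re - L * N := by
    simp only [mul_sub, Finset.sum_sub_distrib, ← Finset.sum_mul, sum_softMinWeight, one_mul,
      re_star_sum_smul_dotProduct, Finset.mul_sum, mul_left_comm _ (2 : ℝ)]
  linarith [le_softMin hμ hsq hlower]

/-- Theorem 4 of the paper: explicit linear minorizer, with closed-form
curvature constant `β`, of the log-sum-exp smoothed group objective
`f(e) = −(1/μ)ln(Σ_k exp(−μ·R̃_k(e)))`, `R̃_k(e) = c_k + 2Re(a_kᴴe) − eᴴA_k e`, with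
respect to the unit-modulus reflection coefficient vector `e`; tight at `e = eⁿ`. -/
theorem stmt16 (M : ℕ) (μ : ℝ) (hμ : 0 < μ)
    {K : Type*} [Fintype K] [Nonempty K]
    (A : K → Matrix (Fin (M + 1)) (Fin (M + 1)) ℂ) (hA : ∀ k, (A k).PosSemidef)
    (a : K → Fin (M + 1) → ℂ) (c : K → ℝ)
    (Rt : K → (Fin (M + 1) → ℂ) → ℝ)
    (hRt : ∀ k e, Rt k e = c k + 2 * (star (a k) ⬝ᵥ e).re
        - (star e ⬝ᵥ (A k).mulVec e).re)
    (f : (Fin (M + 1) → ℂ) → ℝ)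
    (hf : ∀ e, f e = -(1 / μ) * Real.log (∑ k, Real.exp (-μ * Rt k e)))
    (lam nu : K → ℝ)
    (hlam : ∀ k, (lam k • (1 : Matrix (Fin (M + 1)) (Fin (M + 1)) ℂ) - A k).PosSemidef)
    (hnu : ∀ k, (nu k • (1 : Matrix (Fin (M + 1)) (Fin (M + 1)) ℂ)
        - A k * (A k).conjTranspose).PosSemidef)
    (en : Fin (M + 1) → ℂ) (hen : ∀ m, ‖en m‖ = 1)
    (w : K → ℝ)
    (hw : ∀ k, w k = Real.exp (-μ * Rt k en) / ∑ j, Real.exp (-μ * Rt j en))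
    (tp2 : K → ℝ)
    (htp2 : ∀ k, tp2 k = (∑ m, ‖a k m‖ ^ 2) + ((M : ℝ) + 1) * nu k
        + 2 * ∑ m, ‖(A k).mulVec (a k) m‖)
    (β : ℝ)
    (hβ : β = -(Finset.univ.sup' Finset.univ_nonempty lam)
        - 2 * μ * Finset.univ.sup' Finset.univ_nonempty tp2)
    (d u : Fin (M + 1) → ℂ)
    (hd : d = ∑ k, w k • (a k - (A k).mulVec en))
    (hu : u = d - β • en)
    (consE : ℝ)
    (hconsE : consE = f en + 2 * ((M : ℝ) + 1) * β - 2 * (star d ⬝ᵥ en).re) :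
    (∀ e : Fin (M + 1) → ℂ, (∀ m, ‖e m‖ = 1) →
      f e ≥ 2 * (star u ⬝ᵥ e).re + consE) ∧
    f en = 2 * (star u ⬝ᵥ en).re + consE := by
  have hRt' (k : K) (e : Fin (M + 1) → ℂ) : Rt k e = c k + quadFun (a k) (A k) e := by
    rw [hRt, quadFun]
    ring
  have hf' (e : Fin (M + 1) → ℂ) : softMin μ (Rt · e) = f e := (hf e).symm
  have hw' : softMinWeight μ (Rt · en) = w := (funext hw).symm
  have hdist (e : Fin (M + 1) → ℂ) (he : ∀ m, ‖e m‖ = 1) :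
      ∑ m, ‖(e - en) m‖ ^ 2 = 2 * ((M : ℝ) + 1) - 2 * (star en ⬝ᵥ e).re := by
    simpa using sum_norm_sq_sub_of_norm_eq_one hen he
  have hu_re (e : Fin (M + 1) → ℂ) :
      (star u ⬝ᵥ e).re = (star d ⬝ᵥ e).re - β * (star en ⬝ᵥ e).re := by
    simp [hu, sub_dotProduct]
  refine ⟨fun e he ↦ ?_, ?_⟩
  · have hminor := le_softMin_quadFun hμ (fun k ↦ (hA k).isHermitian) hRt' hlam hnu
      (L := Finset.univ.sup' Finset.univ_nonempty lam)
      (T := Finset.univ.sup' Finset.univ_nonempty tp2)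
      (fun k ↦ Finset.le_sup' lam (Finset.mem_univ k))
      (fun k ↦ by
        rw [Fintype.card_fin, Nat.cast_add, Nat.cast_one, ← htp2]
        exact Finset.le_sup' tp2 (Finset.mem_univ k))
      (fun m ↦ (hen m).le) (fun m ↦ (he m).le)
    rw [hw', ← hd, hf', hf', hdist e he, dotProduct_sub, Complex.sub_re] at hminor
    rw [hu_re, hconsE, hβ, ge_iff_le]
    linear_combination hminor
  · have hen_sq : (star en ⬝ᵥ en).re = M + 1 := by simp [re_star_dotProduct_self, hen]
    rw [hu_re, hconsE, hen_sq]
    ring
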